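/- arXiv:1904.08097 — 10 statements merged into one kernel-verified Lean document; each statement's English description precedes it below -/
import Mathlib

section
/- Let A be a real m×n matrix with n ≤ m and let e be the standard basis of ℝ^m (i.e., of Fin m → ℝ). In the n-th exterior power ⋀[ℝ]^n (Fin m → ℝ), the wedge product of the columns of A expands as: ιMulti applied to the family of columns (j ↦ A·eⱼ) equals Σ_f det(A.submatrix f id) • ιMulti (e ∘ f), where the sum runs over all strictly monotone maps f : Fin n → Fin m. -/
/-!
Expand the wedge of `v` in the basis `b.exteriorPower n` of `⋀[R]^n M` indexed by the `n`-subsets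
`f` of `ι`: the coordinate at `f` is the pairing with the wedge of the coordinate forms
`b.coord (f i)`, which is the `n × n` minor of the coordinate matrix of `v` on the rows `f`.
For the columns of `A` in the standard basis these minors are the `det (A.submatrix f id)`.
-/

section

variable {R M ι : Type*} [CommRing R] [AddCommGroup M] [Module R M] [LinearOrder ι] [Fintype ι]

theorem exteriorPower.ιMulti_eq_sum_det_smul {n : ℕ} (b : Module.Basis ι R M) (v : Fin n → M) :
    ιMulti R n v = ∑ f : Fin n ↪o ι,
      (Matrix.of fun i j => b.repr (v j) (f i)).det • ιMulti R n (fun j => b (f j)) := by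
  rw [← (b.exteriorPower n).sum_repr (ιMulti R n v),
    ← Set.powersetCard.ofFinEmbEquiv.sum_comp]
  refine Finset.sum_congr rfl fun f _ => ?_
  rw [basis_repr_apply, ιMultiDual_apply_ιMulti, basis_apply, ιMulti_family,
    Equiv.symm_apply_apply, ← Matrix.det_transpose]
  rfl

theorem ExteriorAlgebra.ιMulti_eq_sum_det_smul {n : ℕ} (b : Module.Basis ι R M)
    (v : Fin n → M) :
    ιMulti R n v = ∑ f : Fin n ↪o ι,
      (Matrix.of fun i j => b.repr (v j) (f i)).det • ιMulti R n (fun j => b (f j)) := by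
  simpa using congrArg Subtype.val (exteriorPower.ιMulti_eq_sum_det_smul b v)

end

theorem iMulti_cols_eq_sum_det_submatrix_smul_general {m n : ℕ}
    (A : Matrix (Fin m) (Fin n) ℝ) :
    ExteriorAlgebra.ιMulti ℝ n (M := Fin m → ℝ) (fun j i => A i j) =
      ∑ f : Fin n ↪o Fin m, (A.submatrix f id).det •
        ExteriorAlgebra.ιMulti ℝ n (M := Fin m → ℝ)
          (fun j => Pi.single (f j) (1 : ℝ)) := by
  rw [ExteriorAlgebra.ιMulti_eq_sum_det_smul (Pi.basisFun ℝ (Fin m))]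
  simp only [Pi.basisFun_repr, Pi.basisFun_apply]
  rfl

/-- In the exterior algebra of `ℝ^m`, the wedge product of the columns of a tall `m × n`
real matrix `A` expands as the sum, over strictly monotone maps `f : Fin n → Fin m`, of
`det (A.submatrix f id)` times the wedge of the standard basis vectors `e_{f 1}, …, e_{f n}`. -/
theorem iMulti_cols_eq_sum_det_submatrix_smul {m n : ℕ} (hn : n ≤ m)
    (A : Matrix (Fin m) (Fin n) ℝ) :
    ExteriorAlgebra.ιMulti ℝ n (M := Fin m → ℝ) (fun j i => A i j) =
      ∑ f : Fin n ↪o Fin m, (A.submatrix f id).det •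
        ExteriorAlgebra.ιMulti ℝ n (M := Fin m → ℝ)
          (fun j => Pi.single (f j) (1 : ℝ)) :=
  iMulti_cols_eq_sum_det_submatrix_smul_general A
end

section
/- For any two real m×n matrices A and B with n ≤ m, the determinant of the n×n product AᵀB equals the dot product of their vector determinants: det(AᵀB) = Σ_f det(A.submatrix f id) · det(B.submatrix f id), where the sum runs over all strictly monotone maps f : Fin n → Fin m. -/
/-!
Expanding every entry `∑ k, A k i * B k j` of `Aᵀ * B` in the Leibniz formula writes
`det (Aᵀ * B)` as `∑ g, det (A.submatrix g id) * ∏ i, B (g i) i` over all maps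
`g : Fin n → Fin m`. Terms with `g` not injective vanish (repeated row), and every injective `g`
factors uniquely as `f ∘ σ` with `f` strictly monotone (sort the values of `g`) and `σ` a
permutation. Since `det (A.submatrix (f ∘ σ) id) = sign σ * det (A.submatrix f id)`, summing over
`σ` for fixed `f` reproduces the Leibniz formula for `det (B.submatrix f id)`.
-/

open Matrix Finset Equiv Function

namespace Tuple

variable {α : Type*} [LinearOrder α] {n : ℕ}

theorem sort_orderEmbedding_comp_perm (f : Fin n ↪o α) (σ : Perm (Fin n)) :
    sort (f ∘ σ) = σ⁻¹ := by
  have h : (f ∘ σ) ∘ sort (f ∘ σ) = f := by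
    rw [comp_perm_comp_sort_eq_comp_sort, sort_eq_refl_iff_monotone.mpr f.monotone]
    rfl
  refine (inv_eq_of_mul_eq_one_right ?_).symm
  ext i
  exact congrArg Fin.val (f.injective (congrFun h i))

def injectiveEquivOrderEmbeddingProdPerm :
    {g : Fin n → α // Injective g} ≃ (Fin n ↪o α) × Perm (Fin n) where
  toFun g := (OrderEmbedding.ofStrictMono (g.1 ∘ sort g.1)
    ((monotone_sort g.1).strictMono_of_injective (g.2.comp (sort g.1).injective)),
    (sort g.1)⁻¹)
  invFun p := ⟨p.1 ∘ p.2, p.1.injective.comp p.2.injective⟩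
  left_inv g := by ext i; simp
  right_inv p := by
    ext <;> simp [sort_orderEmbedding_comp_perm]

end Tuple

namespace Matrix

variable {R m n : Type*} [CommRing R] [Fintype n] [DecidableEq n]

theorem det_transpose_mul_eq_sum_det_submatrix_mul_prod [Fintype m] (A B : Matrix m n R) :
    (Aᵀ * B).det = ∑ g : n → m, (A.submatrix g id).det * ∏ i, B (g i) i := by
  simp only [← det_transpose (A.submatrix _ id), det_apply', mul_apply, transpose_apply,
    submatrix_apply, id, prod_univ_sum, Fintype.piFinset_univ, mul_sum, sum_mul, mul_assoc,
    prod_mul_distrib]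
  exact sum_comm

theorem det_submatrix_eq_zero_of_not_injective (A : Matrix m n R) {g : n → m}
    (hg : ¬Injective g) : (A.submatrix g id).det = 0 := by
  obtain ⟨i, j, hij, hne⟩ : ∃ i j, g i = g j ∧ i ≠ j := by
    simpa [Injective] using hg
  exact det_zero_of_row_eq hne (by ext k; simp [hij])

theorem sum_perm_det_submatrix_comp_mul_prod (A B : Matrix m n R) (f : n → m) :
    ∑ σ : Perm n, (A.submatrix (f ∘ σ) id).det * ∏ i, B (f (σ i)) i =
      (A.submatrix f id).det * (B.submatrix f id).det := by
  rw [det_apply' (B.submatrix f id), mul_sum]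
  refine sum_congr rfl fun σ _ => ?_
  rw [show A.submatrix (f ∘ σ) id = (A.submatrix f id).submatrix σ id from rfl, det_permute]
  simp only [submatrix_apply, id]
  ring

end Matrix

theorem det_transpose_mul_eq_sum_det_submatrix_mul_general {m n : ℕ}
    (A B : Matrix (Fin m) (Fin n) ℝ) :
    (Aᵀ * B).det =
      ∑ f : Fin n ↪o Fin m, (A.submatrix f id).det * (B.submatrix f id).det := by
  have h_inj : ∑ g : Fin n → Fin m, (A.submatrix g id).det * ∏ i, B (g i) i =
      ∑ g : {g : Fin n → Fin m // Injective g}, (A.submatrix g.1 id).det * ∏ i, B (g.1 i) i := by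
    rw [← sum_filter_of_ne (p := Injective) fun g _ hg => ?_]
    · exact sum_subtype _ (by simp) _
    by_contra hinj
    exact hg (by rw [det_submatrix_eq_zero_of_not_injective A hinj, zero_mul])
  rw [det_transpose_mul_eq_sum_det_submatrix_mul_prod, h_inj,
    ← Tuple.injectiveEquivOrderEmbeddingProdPerm.symm.sum_comp, Fintype.sum_prod_type]
  exact sum_congr rfl fun f _ => sum_perm_det_submatrix_comp_mul_prod A B f

/-- Cauchy–Binet: for two real `m × n` matrices `A` and `B` with `n ≤ m`, the determinant of
`Aᵀ * B` is the dot product of their vector determinants, i.e. the sum over strictly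
monotone maps `f : Fin n → Fin m` of the products of the corresponding maximal square
subdeterminants. -/
theorem det_transpose_mul_eq_sum_det_submatrix_mul {m n : ℕ} (hn : n ≤ m)
    (A B : Matrix (Fin m) (Fin n) ℝ) :
    (Aᵀ * B).det =
      ∑ f : Fin n ↪o Fin m, (A.submatrix f id).det * (B.submatrix f id).det :=
  det_transpose_mul_eq_sum_det_submatrix_mul_general A B
end

section
/- Define, for a real m×n matrix A with n ≤ m, gdet A = Σ_f (-1)^(Σ_{j} (f j + j)) det(A.submatrix f id), the sum running over strictly monotone maps f : Fin n → Fin m. Then for every real (m+1)×(n+1) matrix A with n+1 ≤ m+1, this function satisfies the Laplace expansion along the first column: gdet A = Σ_{i : Fin (m+1)} (-1)^i · A i 0 · gdet(A.submatrix i.succAbove Fin.succ), where A.submatrix i.succAbove Fin.succ is the m×n matrix obtained from A by deleting row i and column 0. -/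
open Matrix

/-- The g-determinant of a tall real matrix: the signed sum of the determinants of the
maximal square submatrices, over strictly monotone row-selection maps. -/
noncomputable def gdet {m n : ℕ} (A : Matrix (Fin m) (Fin n) ℝ) : ℝ :=
  ∑ f : Fin n ↪o Fin m,
    (-1 : ℝ) ^ (∑ j : Fin n, ((f j : ℕ) + (j : ℕ))) * (A.submatrix f id).det

open Function

/-!
Expanding each `det (A.submatrix f id)` along its first column writes `gdet A` as a sum over
pairs `(f, k)` of a row selection `f : Fin (n + 1) ↪o Fin (m + 1)` and a position `k`. The map
`(f, k) ↦ (f k, g)`, where `g : Fin n ↪o Fin m` is `f` with position `k` removed and the value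
`f k` squeezed out of the codomain, is a bijection onto the pairs `(i, g)` indexing the right-hand
side: it is injective since `f` is determined by its range `{f k} ∪ (f k).succAbove '' range g`,
and both sides have `(m + 1) * m.choose n` elements. Since `f` is monotone, `k.succAbove j` and
`(f k).succAbove (g j)` are shifted past the deleted index simultaneously, so the signs agree.
-/

namespace OrderEmbedding

variable {m n : ℕ}

noncomputable def removeNth (f : Fin (n + 1) ↪o Fin (m + 1)) (k : Fin (n + 1)) : Fin n ↪o Fin m :=
  (ofStrictMono
      (fun j => (⟨f (k.succAbove j), f.injective.ne (k.succAbove_ne j)⟩ :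
        {x : Fin (m + 1) // x ≠ f k}))
      fun _ _ hab => f.strictMono (Fin.strictMono_succAbove k hab)).trans
    (finSuccAboveOrderIso (f k)).symm.toOrderEmbedding

variable (f : Fin (n + 1) ↪o Fin (m + 1)) (k : Fin (n + 1))

theorem succAbove_removeNth (j : Fin n) :
    (f k).succAbove (f.removeNth k j) = f (k.succAbove j) :=
  congrArg Subtype.val ((finSuccAboveOrderIso (f k)).apply_symm_apply _)

theorem succAbove_comp_removeNth : (f k).succAbove ∘ f.removeNth k = f ∘ k.succAbove :=
  funext (f.succAbove_removeNth k)

theorem castSucc_removeNth_lt_iff (j : Fin n) :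
    (f.removeNth k j).castSucc < f k ↔ j.castSucc < k := by
  rw [← Fin.succAbove_lt_iff_castSucc_lt, succAbove_removeNth, f.lt_iff_lt,
    Fin.succAbove_lt_iff_castSucc_lt]

theorem neg_one_pow_removeNth {R : Type*} [Monoid R] [HasDistribNeg R] (j : Fin n) :
    (-1 : R) ^ ((f.removeNth k j : ℕ) + j) = (-1) ^ ((f (k.succAbove j) : ℕ) + k.succAbove j) := by
  rw [← succAbove_removeNth]
  rcases lt_or_ge j.castSucc k with h | h
  · rw [Fin.succAbove_of_castSucc_lt _ _ h,
      Fin.succAbove_of_castSucc_lt _ _ ((castSucc_removeNth_lt_iff f k j).mpr h)]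
    rfl
  · have h' : f k ≤ (f.removeNth k j).castSucc :=
      not_lt.mp fun hlt => h.not_gt ((castSucc_removeNth_lt_iff f k j).mp hlt)
    rw [Fin.succAbove_of_le_castSucc _ _ h, Fin.succAbove_of_le_castSucc _ _ h', Fin.val_succ,
      Fin.val_succ, add_add_add_comm, one_add_one_eq_two, pow_add _ _ 2, neg_one_sq, mul_one]

theorem neg_one_pow_sum_mul_neg_one_pow {R : Type*} [CommMonoid R] [HasDistribNeg R] :
    (-1 : R) ^ (∑ l, ((f l : ℕ) + l)) * (-1) ^ (k : ℕ)
      = (-1) ^ (f k : ℕ) * (-1) ^ (∑ j, ((f.removeNth k j : ℕ) + j)) := by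
  rw [Fin.sum_univ_succAbove _ k, pow_add, mul_right_comm, ← pow_add, add_assoc,
    pow_add _ (f k : ℕ), Even.neg_one_pow ⟨k, rfl⟩, mul_one, ← Finset.prod_pow_eq_pow_sum,
    ← Finset.prod_pow_eq_pow_sum]
  simp only [neg_one_pow_removeNth]

theorem range_eq_insert_range_succAbove_removeNth :
    Set.range f = insert (f k) (Set.range ((f k).succAbove ∘ f.removeNth k)) := by
  rw [succAbove_comp_removeNth, Set.range_comp, Fin.range_succAbove, ← Set.image_insert_eq,
    Set.insert_eq, Set.union_compl_self, Set.image_univ]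

theorem _root_.Nat.card_orderEmbedding_fin (n : ℕ) (α : Type*) [LinearOrder α] :
    Nat.card (Fin n ↪o α) = (Nat.card α).choose n := by
  rw [Nat.card_congr Set.powersetCard.ofFinEmbEquiv, Set.powersetCard.card]

theorem bijective_apply_removeNth (m n : ℕ) :
    Bijective fun p : (Fin (n + 1) ↪o Fin (m + 1)) × Fin (n + 1) =>
      (p.1 p.2, p.1.removeNth p.2) := by
  refine Injective.bijective_of_nat_card_le ?_ ?_
  · rintro ⟨f, k⟩ ⟨f', k'⟩ h
    obtain ⟨hk, hg⟩ := Prod.mk.inj h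
    obtain rfl : f = f' := range_inj.mp <| by
      rw [f.range_eq_insert_range_succAbove_removeNth k,
        f'.range_eq_insert_range_succAbove_removeNth k', ← hk, ← hg]
    exact Prod.ext rfl (f.injective hk)
  · simp only [Nat.card_prod, Nat.card_orderEmbedding_fin, Nat.card_fin]
    exact (Nat.add_one_mul_choose_eq m n).le

end OrderEmbedding

theorem gdet_laplace_first_column_general {m n : ℕ}
    (A : Matrix (Fin (m + 1)) (Fin (n + 1)) ℝ) :
    gdet A = ∑ i : Fin (m + 1),
      (-1 : ℝ) ^ (i : ℕ) * A i 0 * gdet (A.submatrix i.succAbove Fin.succ) := by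
  simp only [gdet, det_succ_column_zero, Finset.mul_sum, ← Fintype.sum_prod_type']
  refine Fintype.sum_bijective _ (OrderEmbedding.bijective_apply_removeNth m n) _ _ fun ⟨f, k⟩ => ?_
  simp only [submatrix_submatrix, f.succAbove_comp_removeNth k, comp_id, id_comp, submatrix_apply,
    id]
  rw [← mul_assoc, ← mul_assoc, f.neg_one_pow_sum_mul_neg_one_pow k]
  ring

/-- The g-determinant satisfies the Laplace expansion along the first column. -/
theorem gdet_laplace_first_column {m n : ℕ} (hn : n + 1 ≤ m + 1)
    (A : Matrix (Fin (m + 1)) (Fin (n + 1)) ℝ) :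
    gdet A = ∑ i : Fin (m + 1),
      (-1 : ℝ) ^ (i : ℕ) * A i 0 * gdet (A.submatrix i.succAbove Fin.succ) :=
  gdet_laplace_first_column_general A
end

section
/- Let A be a real m×n matrix with n ≤ m, let x : Fin n → ℝ and b : Fin m → ℝ satisfy A.mulVec x = b. Then for every column index j : Fin n, |x j| · detl A = detl(A.updateColumn j b); that is, |x j| · √(Σ_f det²(A.submatrix f id)) = √(Σ_f det²((A.updateColumn j b).submatrix f id)), the sums running over strictly monotone f : Fin n → Fin m. (This is the generalisation of Cramer's rule to the determinant-like function.) -/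
open Matrix

/-- The determinant-like function of a tall real matrix:
`detl A = √(∑_f det² (A.submatrix f id))`, the sum over strictly monotone `f : Fin n → Fin m`. -/
noncomputable def detl {m n : ℕ} (A : Matrix (Fin m) (Fin n) ℝ) : ℝ :=
  Real.sqrt (∑ f : Fin n ↪o Fin m, (A.submatrix f id).det ^ 2)

/-! Each maximal minor of `A.updateCol j (A *ᵥ x)` is, by the square Cramer rule, `x j` times the
corresponding minor of `A`, so the sum of squares defining `detl` scales by `(x j)²`. -/

namespace Matrix

variable {l m n R : Type*}

theorem det_updateCol_mulVec [CommRing R] [Fintype n] [DecidableEq n]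
    (B : Matrix n n R) (x : n → R) (j : n) :
    (B.updateCol j (B *ᵥ x)).det = x j * B.det := by
  have hcols : B *ᵥ x = fun k ↦ ∑ i, x i • B k i := by
    ext k
    simp [mulVec, dotProduct, mul_comm]
  rw [hcols, det_updateCol_sum, smul_eq_mul]

theorem submatrix_id_updateCol [DecidableEq n] (A : Matrix m n R) (j : n) (c : m → R)
    (f : l → m) :
    (A.updateCol j c).submatrix f id = (A.submatrix f id).updateCol j (c ∘ f) := by
  ext i k
  by_cases hk : k = j <;> simp [hk]

theorem mulVec_comp [NonUnitalNonAssocSemiring R] [Fintype n] (A : Matrix m n R) (x : n → R)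
    (f : l → m) : (A *ᵥ x) ∘ f = A.submatrix f id *ᵥ x :=
  rfl

theorem det_submatrix_updateCol_mulVec [CommRing R] [Fintype n] [DecidableEq n]
    (A : Matrix m n R) (x : n → R) (j : n) (f : n → m) :
    ((A.updateCol j (A *ᵥ x)).submatrix f id).det = x j * (A.submatrix f id).det := by
  rw [submatrix_id_updateCol, mulVec_comp, det_updateCol_mulVec]

end Matrix

theorem abs_mul_sqrt_sum_sq {ι : Type*} (s : Finset ι) (c : ℝ) (a : ι → ℝ) :
    |c| * √(∑ i ∈ s, a i ^ 2) = √(∑ i ∈ s, (c * a i) ^ 2) := by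
  simp_rw [mul_pow, ← Finset.mul_sum]
  rw [Real.sqrt_mul (sq_nonneg c), Real.sqrt_sq_eq_abs]

theorem abs_mul_detl_eq_detl_updateColumn_general {m n : ℕ}
    (A : Matrix (Fin m) (Fin n) ℝ) (x : Fin n → ℝ) (b : Fin m → ℝ)
    (hxb : A.mulVec x = b) (j : Fin n) :
    |x j| * detl A = detl (A.updateCol j b) := by
  subst hxb
  simp only [detl, det_submatrix_updateCol_mulVec]
  exact abs_mul_sqrt_sum_sq _ _ _

/-- Cramer's rule for the determinant-like function: if `A.mulVec x = b` then
`|x j| * detl A = detl (A with column j replaced by b)`. -/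
theorem abs_mul_detl_eq_detl_updateColumn {m n : ℕ} (hn : n ≤ m)
    (A : Matrix (Fin m) (Fin n) ℝ) (x : Fin n → ℝ) (b : Fin m → ℝ)
    (hxb : A.mulVec x = b) (j : Fin n) :
    |x j| * detl A = detl (A.updateCol j b) :=
  abs_mul_detl_eq_detl_updateColumn_general A x b hxb j
end

section
/- Adding a scalar multiple of one column to another column leaves the determinant-like function invariant: for a real m×n matrix A with n ≤ m, distinct column indices i ≠ j in Fin n, and k : ℝ, detl(A.updateColumn i (fun r => A r i + k * A r j)) = detl A; equivalently the sum Σ_f det²(·.submatrix f id) over strictly monotone f : Fin n → Fin m is unchanged. -/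
open Matrix

theorem Matrix.submatrix_id_updateCol_s8 {l m n α : Type*} [DecidableEq n] (A : Matrix m n α)
    (j : n) (c : m → α) (f : l → m) :
    (A.updateCol j c).submatrix f id = (A.submatrix f id).updateCol j (c ∘ f) := by
  ext r s
  simp only [submatrix_apply, updateCol_apply, id, Function.comp_apply]

theorem Matrix.det_submatrix_updateCol_add_mul_self {m n R : Type*} [Fintype n] [DecidableEq n]
    [CommRing R] (A : Matrix m n R) {i j : n} (hij : i ≠ j) (c : R) (f : n → m) :
    ((A.updateCol i fun r => A r i + c * A r j).submatrix f id).det = (A.submatrix f id).det := by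
  rw [submatrix_id_updateCol_s8]
  exact det_updateCol_add_smul_self (A.submatrix f id) hij c

theorem detl_updateColumn_add_smul_general {m n : ℕ}
    (A : Matrix (Fin m) (Fin n) ℝ) (i j : Fin n) (hij : i ≠ j) (k : ℝ) :
    detl (A.updateCol i (fun r => A r i + k * A r j)) = detl A ∧
    (∑ f : Fin n ↪o Fin m,
        ((A.updateCol i (fun r => A r i + k * A r j)).submatrix f id).det ^ 2) =
      ∑ f : Fin n ↪o Fin m, (A.submatrix f id).det ^ 2 := by
  have hsum : (∑ f : Fin n ↪o Fin m,
        ((A.updateCol i (fun r => A r i + k * A r j)).submatrix f id).det ^ 2) =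
      ∑ f : Fin n ↪o Fin m, (A.submatrix f id).det ^ 2 :=
    Finset.sum_congr rfl fun f _ => by rw [det_submatrix_updateCol_add_mul_self A hij k f]
  exact ⟨by rw [detl, detl, hsum], hsum⟩

/-- Adding a scalar multiple of one column to another leaves the determinant-like function
invariant, and likewise the underlying sum of squared maximal subdeterminants. -/
theorem detl_updateColumn_add_smul {m n : ℕ} (hn : n ≤ m)
    (A : Matrix (Fin m) (Fin n) ℝ) (i j : Fin n) (hij : i ≠ j) (k : ℝ) :
    detl (A.updateCol i (fun r => A r i + k * A r j)) = detl A ∧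
    (∑ f : Fin n ↪o Fin m,
        ((A.updateCol i (fun r => A r i + k * A r j)).submatrix f id).det ^ 2) =
      ∑ f : Fin n ↪o Fin m, (A.submatrix f id).det ^ 2 :=
  detl_updateColumn_add_smul_general A i j hij k
end

section
/- The determinant-like function is invariant under arbitrary permutations of the rows and of the columns: for any real m×n matrix A with n ≤ m, any permutation σ of Fin m and any permutation τ of Fin n, detl(A.submatrix σ τ) = detl A; equivalently Σ_f det²((A.submatrix σ τ).submatrix f id) = Σ_f det²(A.submatrix f id), the sums running over strictly monotone f : Fin n → Fin m. -/
/-!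
Permuting the columns of a square matrix only changes the sign of its determinant, and so does
reordering its rows; hence the square of a maximal minor depends only on the set of rows chosen.
A row permutation `σ` merely relabels these sets (`S ↦ σ '' S`, a bijection on `n`-subsets of
rows), so the sum of squared maximal minors is unchanged.
-/

open Matrix

open Equiv

namespace Set.powersetCard

variable {α β : Type*} {n : ℕ}

def mapEquiv (e : α ≃ β) : powersetCard α n ≃ powersetCard β n where
  toFun := map n e.toEmbedding
  invFun := map n e.symm.toEmbedding
  left_inv s := by ext; simp
  right_inv s := by ext; simp

@[simp]
lemma coe_mapEquiv (e : α ≃ β) (s : powersetCard α n) :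
    SetLike.coe (mapEquiv e s) = e '' s :=
  coe_map n e.toEmbedding s

end Set.powersetCard

namespace OrderEmbedding

variable {I J : Type*} [LinearOrder I] [LinearOrder J] {n : ℕ}

open Set.powersetCard in
def sortedImage (e : I ≃ J) : (Fin n ↪o I) ≃ (Fin n ↪o J) :=
  ofFinEmbEquiv.trans ((mapEquiv e).trans ofFinEmbEquiv.symm)

lemma range_sortedImage (e : I ≃ J) (f : Fin n ↪o I) :
    Set.range (sortedImage e f) = Set.range (e ∘ f) := by
  ext j
  rw [sortedImage, Equiv.trans_apply, Equiv.trans_apply,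
    Set.powersetCard.mem_range_ofFinEmbEquiv_symm_iff_mem, ← SetLike.mem_coe,
    Set.powersetCard.coe_mapEquiv]
  simp [Equiv.eq_symm_apply]

end OrderEmbedding

namespace Matrix

variable {ι κ R : Type*} [Fintype ι] [DecidableEq ι] [CommRing R]

lemma sq_det_submatrix_perm (M : Matrix ι ι R) (π τ : Perm ι) :
    (M.submatrix π τ).det ^ 2 = M.det ^ 2 := by
  have sq_sign (σ : Perm ι) : ((Perm.sign σ : ℤ) : R) ^ 2 = 1 := by
    rw [← Int.cast_pow, ← Units.val_pow_eq_pow_val, Int.units_sq, Units.val_one, Int.cast_one]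
  change ((M.submatrix π id).submatrix id τ).det ^ 2 = _
  rw [det_permute', det_permute, mul_pow, mul_pow, sq_sign, sq_sign, one_mul, one_mul]

lemma sq_det_submatrix_eq_of_range_eq (A : Matrix κ ι R) (e e' : ι ↪ κ)
    (h : Set.range e = Set.range e') :
    (A.submatrix e id).det ^ 2 = (A.submatrix e' id).det ^ 2 := by
  let π : Perm ι := (Equiv.ofInjective e e.injective).trans
    ((Equiv.setCongr h).trans (Equiv.ofInjective e' e'.injective).symm)
  have hπ (i : ι) : e' (π i) = e i := Equiv.apply_ofInjective_symm e'.injective _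
  have : A.submatrix e id = (A.submatrix e' id).submatrix π (Equiv.refl ι) := by
    ext i j; simp [hπ]
  rw [this, sq_det_submatrix_perm]

end Matrix

theorem detl_submatrix_perm_general {m n : ℕ}
    (A : Matrix (Fin m) (Fin n) ℝ) (σ : Equiv.Perm (Fin m)) (τ : Equiv.Perm (Fin n)) :
    detl (A.submatrix σ τ) = detl A ∧
    (∑ f : Fin n ↪o Fin m, ((A.submatrix σ τ).submatrix f id).det ^ 2) =
      ∑ f : Fin n ↪o Fin m, (A.submatrix f id).det ^ 2 := by
  have hsum : (∑ f : Fin n ↪o Fin m, ((A.submatrix σ τ).submatrix f id).det ^ 2) =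
      ∑ f : Fin n ↪o Fin m, (A.submatrix f id).det ^ 2 := calc
    _ = ∑ f : Fin n ↪o Fin m, (A.submatrix (σ ∘ f) id).det ^ 2 := by
      congr! 1 with f
      exact sq_det_submatrix_perm (A.submatrix (σ ∘ f) id) (Equiv.refl _) τ
    _ = ∑ f : Fin n ↪o Fin m, (A.submatrix (OrderEmbedding.sortedImage σ f) id).det ^ 2 := by
      congr! 1 with f
      exact sq_det_submatrix_eq_of_range_eq A (f.toEmbedding.trans σ.toEmbedding) _
        (OrderEmbedding.range_sortedImage σ f).symm
    _ = _ := Equiv.sum_comp (OrderEmbedding.sortedImage σ) fun f => (A.submatrix f id).det ^ 2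
  exact ⟨by rw [detl, detl, hsum], hsum⟩

/-- The determinant-like function is invariant under arbitrary permutations of the rows and
of the columns, and likewise the underlying sum of squared maximal subdeterminants. -/
theorem detl_submatrix_perm {m n : ℕ} (hn : n ≤ m)
    (A : Matrix (Fin m) (Fin n) ℝ) (σ : Equiv.Perm (Fin m)) (τ : Equiv.Perm (Fin n)) :
    detl (A.submatrix σ τ) = detl A ∧
    (∑ f : Fin n ↪o Fin m, ((A.submatrix σ τ).submatrix f id).det ^ 2) =
      ∑ f : Fin n ↪o Fin m, (A.submatrix f id).det ^ 2 :=
  detl_submatrix_perm_general A σ τ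
end

section
/- The determinant-like function is not multiplicative: there exist a real 3×2 matrix A and a real 2×1 matrix B such that detl(A * B) ≠ detl A · detl B, where detl of an m×n matrix (n ≤ m) is √(Σ_f det²(·.submatrix f id)) over strictly monotone f : Fin n → Fin m. -/
open Matrix

/-
The all-ones `3 × 2` matrix `A` has two equal columns, so all its maximal minors vanish and
`detl A = 0`; but for the first unit vector `B`, `A * B` is the all-ones column, whose `1 × 1` minors
are `1`, so `detl (A * B) ≠ 0`.
-/

theorem detl_eq_zero_iff {m n : ℕ} (A : Matrix (Fin m) (Fin n) ℝ) :
    detl A = 0 ↔ ∀ f : Fin n ↪o Fin m, (A.submatrix f id).det = 0 := by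
  rw [detl, Real.sqrt_eq_zero (Finset.sum_nonneg fun f _ => sq_nonneg _),
    Finset.sum_eq_zero_iff_of_nonneg fun f _ => sq_nonneg _]
  simp

theorem detl_eq_zero_of_col_eq {m n : ℕ} (A : Matrix (Fin m) (Fin n) ℝ) {i j : Fin n}
    (hij : i ≠ j) (hcol : ∀ k, A k i = A k j) : detl A = 0 :=
  (detl_eq_zero_iff A).2 fun f => det_zero_of_column_eq hij fun k => hcol (f k)

theorem detl_of_one_ne_zero {m : ℕ} (hm : 0 < m) :
    detl (of fun _ _ => 1 : Matrix (Fin m) (Fin 1) ℝ) ≠ 0 := by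
  rw [Ne, detl_eq_zero_iff, not_forall]
  exact ⟨Fin.castLEOrderEmb hm, by simp⟩

/-- The determinant-like function is not multiplicative: there exist a real `3 × 2` matrix
`A` and a real `2 × 1` matrix `B` with `detl (A * B) ≠ detl A * detl B`. -/
theorem detl_not_multiplicative :
    ∃ (A : Matrix (Fin 3) (Fin 2) ℝ) (B : Matrix (Fin 2) (Fin 1) ℝ),
      detl (A * B) ≠ detl A * detl B := by
  refine ⟨of fun _ _ => 1, of ![![1], ![0]], ?_⟩
  have hA : detl (of fun _ _ => 1 : Matrix (Fin 3) (Fin 2) ℝ) = 0 :=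
    detl_eq_zero_of_col_eq _ (i := 0) (j := 1) (by decide) fun _ => rfl
  have hAB : (of fun _ _ => 1 : Matrix (Fin 3) (Fin 2) ℝ) * (of ![![1], ![0]] : Matrix _ (Fin 1) ℝ) =
      of fun _ _ => 1 := by
    ext i j
    simp [mul_apply, Fin.sum_univ_two]
  rw [hAB, hA, zero_mul]
  exact detl_of_one_ne_zero (by norm_num)
end

section
/- For the 3×2 case, the determinant-like function equals the magnitude of the cross product: for any u, v : Fin 3 → ℝ, if A is the 3×2 real matrix whose first column is u and second column is v, then detl A = √(Σ_f det²(A.submatrix f id)) equals the Euclidean norm of the cross product u ×₃ v (Mathlib's crossProduct u v), i.e., √((crossProduct u v 0)² + (crossProduct u v 1)² + (crossProduct u v 2)²). -/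
open Matrix

/-! The maximal square submatrices of a `3 × 2` matrix are indexed by the row pairs `i < j`, and
their `2 × 2` minors are, up to sign, the components of the cross product of the two columns. -/

def OrderEmbedding.finTwoEquiv (α : Type*) [Preorder α] :
    (Fin 2 ↪o α) ≃ {p : α × α // p.1 < p.2} where
  toFun f := ⟨(f 0, f 1), f.strictMono Fin.zero_lt_one⟩
  invFun p := OrderEmbedding.ofStrictMono ![p.1.1, p.1.2] <| by
    simpa [Fin.strictMono_iff_lt_succ] using p.2
  left_inv f := by ext i; fin_cases i <;> rfl
  right_inv p := rfl

theorem OrderEmbedding.sum_fin_two {α M : Type*} [Preorder α] [Fintype α]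
    [DecidableRel (α := α) (· < ·)] [AddCommMonoid M] [Fintype (Fin 2 ↪o α)] (g : α → α → M) :
    ∑ f : Fin 2 ↪o α, g (f 0) (f 1) = ∑ p : α × α with p.1 < p.2, g p.1 p.2 := by
  rw [Finset.sum_subtype _ fun _ => Finset.mem_filter_univ _]
  exact Fintype.sum_equiv (OrderEmbedding.finTwoEquiv α) _ _ fun _ => rfl

theorem sum_sq_det_submatrix_eq_sum_sq_cross {R : Type*} [CommRing R]
    (A : Matrix (Fin 3) (Fin 2) R) :
    ∑ f : Fin 2 ↪o Fin 3, (A.submatrix f id).det ^ 2 = ∑ i, (Aᵀ 0 ⨯₃ Aᵀ 1) i ^ 2 := by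
  have hpairs : ({p : Fin 3 × Fin 3 | p.1 < p.2} : Finset _) = {(0, 1), (0, 2), (1, 2)} := by
    decide
  simp only [det_fin_two, submatrix_apply, id]
  rw [OrderEmbedding.sum_fin_two (fun i j => (A i 0 * A j 1 - A i 1 * A j 0) ^ 2), hpairs,
    Finset.sum_insert (by decide), Finset.sum_insert (by decide), Finset.sum_singleton,
    Fin.sum_univ_three]
  simp only [cross_apply, transpose_apply, cons_val_zero, cons_val_one, cons_val]
  ring

/-- In the `3 × 2` case the determinant-like function equals the Euclidean norm of the
cross product of the two columns. -/
theorem detl_eq_norm_crossProduct (u v : Fin 3 → ℝ) (A : Matrix (Fin 3) (Fin 2) ℝ)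
    (hu : ∀ i, A i 0 = u i) (hv : ∀ i, A i 1 = v i) :
    detl A = Real.sqrt ((crossProduct u v 0) ^ 2 + (crossProduct u v 1) ^ 2 +
      (crossProduct u v 2) ^ 2) := by
  have hAu : Aᵀ 0 = u := funext hu
  have hAv : Aᵀ 1 = v := funext hv
  rw [detl, sum_sq_det_submatrix_eq_sum_sq_cross, hAu, hAv, Fin.sum_univ_three]
end

section
/- The scalar generalised determinant tdet A = Σ_f det(A.submatrix f id) (sum over strictly monotone f : Fin n → Fin m) satisfies the same three properties as the vector determinant: (i) it is linear in each column: tdet(A.updateColumn j (a • u + b • v)) = a · tdet(A.updateColumn j u) + b · tdet(A.updateColumn j v); (ii) it vanishes whenever two distinct columns of A are equal; (iii) it is normalised: if E is the m×n matrix with E i j = 1 when (i : ℕ) = (j : ℕ) and 0 otherwise, then tdet E = 1. In particular tdet is a generalisation distinct from the vector determinant satisfying the properties of linearity, irreflexivity and normalisation. -/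
/-!
Each of the three properties holds summand by summand. Selecting rows commutes with
replacing a column, so linearity and the vanishing on equal columns are inherited from
the determinant of each maximal square submatrix. For the normalisation, the submatrix of
`E` on the first `n` rows is the identity, and every other strictly monotone choice of rows
picks some row of index `≥ n`, which is zero in `E`.
-/

open Matrix

/-- Joshi's scalar generalised determinant of a tall real matrix: the sum of the
determinants of its maximal square submatrices, over strictly monotone
`f : Fin n → Fin m`. -/
noncomputable def tdet {m n : ℕ} (A : Matrix (Fin m) (Fin n) ℝ) : ℝ :=
  ∑ f : Fin n ↪o Fin m, (A.submatrix f id).det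

namespace Fin

theorem eq_castLEOrderEmb_of_forall_val_lt {n m : ℕ} (h : n ≤ m) {f : Fin n ↪o Fin m}
    (hf : ∀ i, (f i : ℕ) < n) : f = castLEOrderEmb h := by
  have hmono : StrictMono fun i => (⟨f i, hf i⟩ : Fin n) := fun _ _ hij => f.strictMono hij
  ext i
  exact (congrArg Fin.val hmono.apply_eq : ((⟨f i, hf i⟩ : Fin n) : ℕ) = i)

theorem exists_le_val_of_ne_castLEOrderEmb {n m : ℕ} (h : n ≤ m) {f : Fin n ↪o Fin m}
    (hf : f ≠ castLEOrderEmb h) : ∃ i, n ≤ (f i : ℕ) := by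
  by_contra! hlt
  exact hf (eq_castLEOrderEmb_of_forall_val_lt h hlt)

end Fin

namespace Matrix

theorem submatrix_updateCol_id {l m n R : Type*} [DecidableEq n] (A : Matrix m n R) (j : n)
    (c : m → R) (f : l → m) :
    (A.updateCol j c).submatrix f id = (A.submatrix f id).updateCol j (c ∘ f) := by
  ext i k
  simp [updateCol_apply]

theorem det_updateCol_smul_add_smul {n R : Type*} [DecidableEq n] [Fintype n] [CommRing R]
    (M : Matrix n n R) (j : n) (a b : R) (u v : n → R) :
    (M.updateCol j (a • u + b • v)).det = a * (M.updateCol j u).det + b * (M.updateCol j v).det := by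
  rw [det_updateCol_add, det_updateCol_smul, det_updateCol_smul]

section RectOne

variable (R : Type*) [CommRing R] (m n : ℕ)

/-- The matrix `E` of the normalisation property. -/
def rectOne : Matrix (Fin m) (Fin n) R :=
  of fun i j => if (i : ℕ) = (j : ℕ) then 1 else 0

variable {R m n}

theorem rectOne_submatrix_castLE (h : n ≤ m) :
    (rectOne R m n).submatrix (Fin.castLEOrderEmb h) id = 1 := by
  ext i j
  simp [rectOne, one_apply, Fin.ext_iff]

theorem det_rectOne_submatrix_of_ne_castLE (h : n ≤ m) {f : Fin n ↪o Fin m}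
    (hf : f ≠ Fin.castLEOrderEmb h) : ((rectOne R m n).submatrix f id).det = 0 := by
  obtain ⟨i, hi⟩ := Fin.exists_le_val_of_ne_castLEOrderEmb h hf
  refine det_eq_zero_of_row_eq_zero i fun j => ?_
  simp only [rectOne, submatrix_apply, id, of_apply]
  exact if_neg (by omega)

end RectOne

end Matrix

theorem tdet_updateCol_smul_add_smul {m n : ℕ} (A : Matrix (Fin m) (Fin n) ℝ) (j : Fin n)
    (a b : ℝ) (u v : Fin m → ℝ) :
    tdet (A.updateCol j (a • u + b • v)) =
      a * tdet (A.updateCol j u) + b * tdet (A.updateCol j v) := by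
  simp only [tdet, Finset.mul_sum, ← Finset.sum_add_distrib, submatrix_updateCol_id,
    Function.comp_def]
  exact Finset.sum_congr rfl fun f _ => det_updateCol_smul_add_smul _ j a b _ _

theorem tdet_eq_zero_of_col_eq {m n : ℕ} (A : Matrix (Fin m) (Fin n) ℝ) {j₁ j₂ : Fin n}
    (hne : j₁ ≠ j₂) (h : ∀ i, A i j₁ = A i j₂) : tdet A = 0 :=
  Finset.sum_eq_zero fun f _ => det_zero_of_column_eq hne fun k => h (f k)

theorem tdet_rectOne {m n : ℕ} (h : n ≤ m) : tdet (rectOne ℝ m n) = 1 := by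
  rw [tdet, Finset.sum_eq_single (Fin.castLEOrderEmb h), rectOne_submatrix_castLE, det_one]
  · exact fun f _ hf => det_rectOne_submatrix_of_ne_castLE h hf
  · exact fun hmem => absurd (Finset.mem_univ _) hmem

/-- `tdet` satisfies the three properties claimed to define the vector determinant:
(i) linearity in each column, (ii) it vanishes whenever two distinct columns are equal,
and (iii) normalisation: `tdet E = 1` where `E` is the `m × n` matrix whose columns are
the first `n` standard basis vectors of `ℝ^m`. -/
theorem tdet_linear_irreflexive_normalised {m n : ℕ} (hn : n ≤ m) :
    (∀ (A : Matrix (Fin m) (Fin n) ℝ) (j : Fin n) (a b : ℝ) (u v : Fin m → ℝ),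
      tdet (A.updateCol j (a • u + b • v)) =
        a * tdet (A.updateCol j u) + b * tdet (A.updateCol j v)) ∧
    (∀ (A : Matrix (Fin m) (Fin n) ℝ) (j₁ j₂ : Fin n), j₁ ≠ j₂ →
      (∀ i, A i j₁ = A i j₂) → tdet A = 0) ∧
    tdet (Matrix.of fun (i : Fin m) (j : Fin n) =>
      if (i : ℕ) = (j : ℕ) then (1 : ℝ) else 0) = 1 :=
  ⟨tdet_updateCol_smul_add_smul, fun A _ _ hne h => tdet_eq_zero_of_col_eq A hne h,
    tdet_rectOne hn⟩
end

section
/- Let m ≥ 3 and let P : Fin m → (Fin 2 → ℝ) be the vertices of a polygon in ℝ². Let M be the real m×2 matrix whose i-th row is P i + P (i+1), indices taken cyclically (i+1 computed modulo m). Then gdet M = Σ_{i : Fin m} (P i 0 · P (i+1) 1 − P (i+1) 0 · P i 1); that is, half the g-determinant of M equals the shoelace expression ½ Σ_i (x_i y_{i+1} − x_{i+1} y_i) for the (signed) area of the polygon. -/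
/-!
Write `ω(u, v) = u₀ v₁ - v₀ u₁` and `rᵢ = Pᵢ + Pᵢ₊₁` for the `N` vertices `Pᵢ`. For a matrix with
two columns the g-determinant is `∑_{i<j} (-1)^(i+j+1) ω(rᵢ, rⱼ)`. The alternating sum
`∑_{i<j} (-1)^i rᵢ` telescopes to `P₀ - (-1)^j Pⱼ`, so bilinearity and `ω(u, u) = 0` collapse the
double sum to `∑ⱼ ω(Pⱼ, Pⱼ₊₁) + (-1)^N ω(P₀, P_N)`, and the last term vanishes because `P_N = P₀`.
-/

open Matrix

open Finset

@[simps]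
def finTwoOrderEmbEquiv (α : Type*) [Preorder α] : (Fin 2 ↪o α) ≃ {p : α × α // p.1 < p.2} where
  toFun f := ⟨(f 0, f 1), f.strictMono Fin.zero_lt_one⟩
  invFun p := .ofStrictMono ![p.1.1, p.1.2] (by simp [Fin.strictMono_iff_lt_succ, p.2])
  left_inv f := by ext i; fin_cases i <;> rfl
  right_inv p := rfl

section CrossForm

variable (R : Type*) [CommRing R]

noncomputable def crossForm : (Fin 2 → R) →ₗ[R] (Fin 2 → R) →ₗ[R] R :=
  Matrix.toLinearMap₂' R !![0, 1; -1, 0]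

variable {R}

lemma crossForm_apply (u v : Fin 2 → R) : crossForm R u v = u 0 * v 1 - v 0 * u 1 := by
  simp [crossForm, Matrix.toLinearMap₂'_apply', dotProduct, mulVec, Fin.sum_univ_two]
  ring

lemma crossForm_isAlt : (crossForm R).IsAlt := fun u => by
  rw [crossForm_apply]; ring

end CrossForm

lemma sum_range_neg_one_pow_smul_add_succ {R M : Type*} [Ring R] [AddCommGroup M] [Module R M]
    (q : ℕ → M) (n : ℕ) :
    ∑ i ∈ range n, (-1 : R) ^ i • (q i + q (i + 1)) = q 0 - (-1 : R) ^ n • q n := by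
  convert sum_range_sub' (fun i => (-1 : R) ^ i • q i) n using 2 with i
  · rw [pow_succ, smul_add, mul_neg_one, neg_smul, sub_neg_eq_add]
  · simp

lemma LinearMap.IsAlt.sum_range_sum_range_neg_one_pow_smul_add_succ {R M N : Type*} [CommRing R]
    [AddCommGroup M] [Module R M] [AddCommGroup N] [Module R N] {ω : M →ₗ[R] M →ₗ[R] N}
    (hω : ω.IsAlt) (q : ℕ → M) (n : ℕ) :
    ∑ j ∈ Finset.range n, ∑ i ∈ Finset.range j,
        (-1 : R) ^ (i + j + 1) • ω (q i + q (i + 1)) (q j + q (j + 1)) =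
      ∑ j ∈ Finset.range n, ω (q j) (q (j + 1)) + (-1 : R) ^ n • ω (q 0) (q n) := by
  have inner (j : ℕ) : ∑ i ∈ Finset.range j,
        (-1 : R) ^ (i + j + 1) • ω (q i + q (i + 1)) (q j + q (j + 1)) =
      ω (q j) (q (j + 1)) + ω (q 0) ((-1 : R) ^ (j + 1) • (q j + q (j + 1))) := by
    calc _ = (-1 : R) ^ (j + 1) • ω (∑ i ∈ Finset.range j, (-1 : R) ^ i • (q i + q (i + 1)))
          (q j + q (j + 1)) := by
          simp only [map_sum, map_smul, LinearMap.sum_apply, LinearMap.smul_apply, smul_sum,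
            smul_smul]
          exact sum_congr rfl fun i _ => by ring_nf
      _ = _ := by
          rw [sum_range_neg_one_pow_smul_add_succ]
          simp only [map_sub, map_smul, LinearMap.sub_apply, LinearMap.smul_apply, smul_sub,
            smul_smul]
          rw [map_add (ω (q j)), hω, zero_add, ← pow_add,
            Odd.neg_one_pow (n := j + 1 + j) ⟨j, by ring⟩, neg_one_smul, sub_neg_eq_add, add_comm]
  rw [sum_congr rfl fun j _ => inner j, sum_add_distrib, ← map_sum]
  simp only [pow_succ, mul_neg_one, neg_smul, sum_neg_distrib, sum_range_neg_one_pow_smul_add_succ]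
  simp [hω (q 0)]

lemma gdet_of_eq_sum_sum_Iio {N : ℕ} (v : Fin N → Fin 2 → ℝ) :
    gdet (of v) =
      ∑ j : Fin N, ∑ i ∈ Iio j, (-1 : ℝ) ^ ((i : ℕ) + j + 1) * crossForm ℝ (v i) (v j) := by
  let F (i j : Fin N) : ℝ := (-1 : ℝ) ^ ((i : ℕ) + j + 1) * crossForm ℝ (v i) (v j)
  calc gdet (of v) = ∑ p : {p : Fin N × Fin N // p.1 < p.2}, F p.1.1 p.1.2 := by
        rw [gdet, ← (finTwoOrderEmbEquiv _).symm.sum_comp]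
        congr! 1 with p
        rw [det_fin_two]
        simp [F, Fin.sum_univ_two, crossForm_apply, add_assoc]
        ring
    _ = ∑ p ∈ (univ : Finset (Fin N × Fin N)) with p.1 < p.2, F p.1 p.2 :=
      (sum_subtype _ (fun _ => mem_filter_univ _) fun p : Fin N × Fin N => F p.1 p.2).symm
    _ = ∑ j, ∑ i ∈ Iio j, F i j := sum_finset_product_right' _ _ _ fun _ => by simp

lemma Fin.sum_univ_sum_Iio_eq_sum_range_sum_range {M : Type*} [AddCommMonoid M] (N : ℕ)
    (G : ℕ → ℕ → M) :
    ∑ j : Fin N, ∑ i ∈ Iio j, G i j = ∑ j ∈ range N, ∑ i ∈ range j, G i j := by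
  rw [← Fin.sum_univ_eq_sum_range]
  congr! 1 with j
  rw [← Nat.Iio_eq_range, ← Fin.map_valEmbedding_Iio, sum_map]
  rfl

/-- Shoelace formula via the g-determinant: for a polygon with `m + 3` vertices
`P 0, …, P (m+2)` in `ℝ²`, the g-determinant of the matrix whose `i`-th row is
`P i + P (i + 1)` (indices cyclic) equals the shoelace sum
`∑ i, (x_i y_{i+1} − x_{i+1} y_i)`. -/
theorem gdet_cyclic_sum_eq_shoelace {m : ℕ} (P : Fin (m + 3) → Fin 2 → ℝ) :
    gdet (Matrix.of fun (i : Fin (m + 3)) (j : Fin 2) => P i j + P (i + 1) j) =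
      ∑ i : Fin (m + 3), (P i 0 * P (i + 1) 1 - P (i + 1) 0 * P i 1) := by
  open Fin.NatCast in
  set q : ℕ → Fin 2 → ℝ := fun k => P k
  have hq (i : Fin (m + 3)) : q i = P i := congrArg P (Fin.cast_val_eq_self i)
  have hq_succ (i : Fin (m + 3)) : q (i + 1) = P (i + 1) := by simp [q]
  have hq_period : q (m + 3) = q 0 := by simp [q]
  have hrows : (Matrix.of fun (i : Fin (m + 3)) (j : Fin 2) => P i j + P (i + 1) j) =
      Matrix.of fun i : Fin (m + 3) => q i + q (i + 1) := by
    ext i j; simp [hq, hq_succ]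
  rw [hrows, gdet_of_eq_sum_sum_Iio, Fin.sum_univ_sum_Iio_eq_sum_range_sum_range (m + 3)
    fun i j => (-1 : ℝ) ^ (i + j + 1) * crossForm ℝ (q i + q (i + 1)) (q j + q (j + 1))]
  simp only [← smul_eq_mul]
  rw [crossForm_isAlt.sum_range_sum_range_neg_one_pow_smul_add_succ, hq_period, crossForm_isAlt,
    smul_zero, add_zero, ← Fin.sum_univ_eq_sum_range]
  simp [crossForm_apply, hq, hq_succ]
end
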